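/- arXiv:2603.13712 — 2 statements merged into one kernel-verified Lean document; each statement's English description precedes it below -/
import Mathlib

section
/- Let A and W be n×n Hermitian matrices with operator norm ‖W‖∞ ≤ 1 and Tr(W A) = ‖A‖₁. Then every eigenvector v of A with nonzero eigenvalue a satisfies W v = sign(a) v, where sign(a) = 1 if a > 0 and sign(a) = −1 if a < 0. -/
/-!
Expand `A` in an orthonormal eigenbasis `bᵢ` with eigenvalues `λᵢ`. Then `Tr(W A) = ∑ λᵢ ⟪bᵢ, W bᵢ⟫`
and `‖A‖₁ = ∑ |λᵢ|`, while `λᵢ Re ⟪bᵢ, W bᵢ⟫ ≤ |λᵢ|` termwise because `W` is a contraction.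
Equality of the sums forces equality of every term, so `Re ⟪bᵢ, sign(λᵢ) W bᵢ⟫ = 1 = ‖bᵢ‖²` when
`λᵢ ≠ 0`; as `‖W bᵢ‖ ≤ 1`, this is only possible if `W bᵢ = sign(λᵢ) bᵢ`. Finally, an eigenvector
for `a` only has components along the `bᵢ` with `λᵢ = a`.
-/

open scoped ComplexOrder

/-- The trace norm (Schatten 1-norm) of a complex matrix: `‖A‖₁ = Tr √(Aᴴ A)`. -/
noncomputable def traceNorm {m : Type*} [Fintype m] [DecidableEq m]
    (A : Matrix m m ℂ) : ℝ :=
  (((Matrix.posSemidef_conjTranspose_mul_self A).1.eigenvectorUnitary.1 *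
      Matrix.diagonal (((↑) : ℝ → ℂ) ∘ (√·) ∘ (Matrix.posSemidef_conjTranspose_mul_self A).1.eigenvalues) *
      (star (Matrix.posSemidef_conjTranspose_mul_self A).1.eigenvectorUnitary :
        Matrix m m ℂ)).trace).re

open scoped InnerProductSpace
open RCLike Matrix

section InnerProductSpace

variable {𝕜 E ι : Type*} [RCLike 𝕜] [NormedAddCommGroup E] [InnerProductSpace 𝕜 E]

theorem eq_of_norm_le_of_re_inner_eq_norm_sq {x y : E} (hy : ‖y‖ ≤ ‖x‖)
    (h : re ⟪x, y⟫_𝕜 = ‖x‖ ^ 2) : y = x := by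
  have hyx : re ⟪y, x⟫_𝕜 = ‖x‖ ^ 2 := by rwa [← inner_conj_symm, conj_re]
  have h0 : ‖y - x‖ ^ 2 ≤ 0 := by
    rw [@norm_sub_sq 𝕜, hyx]
    nlinarith [norm_nonneg y]
  exact sub_eq_zero.mp (norm_eq_zero.mp (by nlinarith [norm_nonneg (y - x)]))

theorem eq_sign_smul_of_mul_re_inner_eq_abs_mul {x y : E} {μ : ℝ} (hμ : μ ≠ 0)
    (hy : ‖y‖ ≤ ‖x‖) (h : μ * re ⟪x, y⟫_𝕜 = |μ| * ‖x‖ ^ 2) :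
    y = (if 0 < μ then (1 : 𝕜) else -1) • x := by
  rcases hμ.lt_or_gt with hneg | hpos
  · rw [if_neg hneg.not_gt, neg_one_smul, ← neg_eq_iff_eq_neg]
    refine eq_of_norm_le_of_re_inner_eq_norm_sq (𝕜 := 𝕜) (by rwa [norm_neg]) ?_
    rw [abs_of_neg hneg] at h
    rw [inner_neg_right, map_neg]
    nlinarith
  · rw [if_pos hpos, one_smul]
    refine eq_of_norm_le_of_re_inner_eq_norm_sq (𝕜 := 𝕜) hy ?_
    rw [abs_of_pos hpos] at h
    exact mul_left_cancel₀ hpos.ne' h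

variable [Fintype ι]

theorem OrthonormalBasis.apply_eq_smul_of_forall_inner_ne_zero (b : OrthonormalBasis ι 𝕜 E)
    (T : E →ₗ[𝕜] E) {c : 𝕜} {v : E} (h : ∀ i, ⟪b i, v⟫_𝕜 ≠ 0 → T (b i) = c • b i) :
    T v = c • v := by
  conv_lhs => rw [← b.sum_repr' v]
  conv_rhs => rw [← b.sum_repr' v]
  simp only [map_sum, map_smul, Finset.smul_sum]
  refine Finset.sum_congr rfl fun i _ => ?_
  by_cases hi : ⟪b i, v⟫_𝕜 = 0
  · simp [hi]
  · rw [h i hi, smul_comm]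

variable {T S : E →ₗ[𝕜] E} {b : OrthonormalBasis ι 𝕜 E} {μ : ι → ℝ}

theorem LinearMap.trace_comp_eq_sum_mul_inner (hb : ∀ i, S (b i) = (μ i : 𝕜) • b i) :
    LinearMap.trace 𝕜 E (T ∘ₗ S) = ∑ i, (μ i : 𝕜) * ⟪b i, T (b i)⟫_𝕜 := by
  simp only [LinearMap.trace_eq_sum_inner _ b, LinearMap.comp_apply, hb, map_smul,
    inner_smul_right]

theorem mul_re_inner_apply_le_abs (hT : ∀ u, ‖T u‖ ≤ ‖u‖) {x : E} (hx : ‖x‖ = 1) (r : ℝ) :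
    r * re ⟪x, T x⟫_𝕜 ≤ |r| := by
  have hre : |re ⟪x, T x⟫_𝕜| ≤ 1 :=
    calc |re ⟪x, T x⟫_𝕜| ≤ ‖⟪x, T x⟫_𝕜‖ := abs_re_le_norm _
      _ ≤ ‖x‖ * ‖T x‖ := norm_inner_le_norm _ _
      _ ≤ 1 := by rw [hx, one_mul]; exact hx ▸ hT x
  calc r * re ⟪x, T x⟫_𝕜 ≤ |r * re ⟪x, T x⟫_𝕜| := le_abs_self _
    _ = |r| * |re ⟪x, T x⟫_𝕜| := abs_mul _ _
    _ ≤ |r| := mul_le_of_le_one_right (abs_nonneg r) hre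

theorem mul_re_inner_eq_abs_of_re_trace_comp_eq (hb : ∀ i, S (b i) = (μ i : 𝕜) • b i)
    (hT : ∀ u, ‖T u‖ ≤ ‖u‖) (htr : re (LinearMap.trace 𝕜 E (T ∘ₗ S)) = ∑ i, |μ i|) (i : ι) :
    μ i * re ⟪b i, T (b i)⟫_𝕜 = |μ i| := by
  rw [LinearMap.trace_comp_eq_sum_mul_inner hb, map_sum] at htr
  simp only [re_ofReal_mul] at htr
  exact (Finset.sum_eq_sum_iff_of_le fun j _ =>
    mul_re_inner_apply_le_abs hT (b.orthonormal.1 j) (μ j)).mp htr i (Finset.mem_univ i)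

theorem apply_eq_sign_smul_of_re_trace_comp_eq (hS : S.IsSymmetric)
    (hb : ∀ i, S (b i) = (μ i : 𝕜) • b i) (hT : ∀ u, ‖T u‖ ≤ ‖u‖)
    (htr : re (LinearMap.trace 𝕜 E (T ∘ₗ S)) = ∑ i, |μ i|) {a : ℝ} (ha : a ≠ 0) {v : E}
    (hv : S v = (a : 𝕜) • v) : T v = (if 0 < a then (1 : 𝕜) else -1) • v := by
  refine b.apply_eq_smul_of_forall_inner_ne_zero T fun i hi => ?_
  have hμa : μ i = a := by
    by_contra hne
    exact hi (hS.orthogonalFamily_eigenspaces (fun h => hne (ofReal_injective h))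
      ⟨b i, Module.End.mem_eigenspace_iff.mpr (hb i)⟩ ⟨v, Module.End.mem_eigenspace_iff.mpr hv⟩)
  have hbi : ‖b i‖ = 1 := b.orthonormal.1 i
  rw [← hμa] at ha ⊢
  refine eq_sign_smul_of_mul_re_inner_eq_abs_mul ha (hbi ▸ hT (b i)) ?_
  rw [hbi, one_pow, mul_one]
  exact mul_re_inner_eq_abs_of_re_trace_comp_eq hb hT htr i

end InnerProductSpace

section Matrix

variable {𝕜 m : Type*} [RCLike 𝕜] [Fintype m] [DecidableEq m]

theorem Matrix.IsHermitian.trace_cfc {A : Matrix m m 𝕜} (hA : A.IsHermitian) (f : ℝ → ℝ) :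
    (cfc f A).trace = ∑ i, (f (hA.eigenvalues i) : 𝕜) := by
  rw [hA.cfc_eq, IsHermitian.cfc, Unitary.conjStarAlgAut_apply, trace_mul_cycle,
    Unitary.coe_star_mul_self, one_mul, trace_diagonal]
  simp only [Function.comp_apply]

theorem Matrix.IsHermitian.cfc_sqrt_conjTranspose_mul_self {A : Matrix m m 𝕜}
    (hA : A.IsHermitian) : cfc Real.sqrt (Aᴴ * A) = cfc (fun x : ℝ => |x|) A := by
  rw [hA.eq, ← sq, ← cfc_pow_id (R := ℝ) A 2 hA.isSelfAdjoint, ← cfc_comp' Real.sqrt (· ^ 2) A]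
  simp only [Real.sqrt_sq_eq_abs]

theorem traceNorm_eq_re_trace_cfc_sqrt (A : Matrix m m ℂ) :
    traceNorm A = (cfc Real.sqrt (Aᴴ * A)).trace.re := by
  rw [(posSemidef_conjTranspose_mul_self A).1.cfc_eq]
  rfl

theorem Matrix.IsHermitian.traceNorm_eq_sum_abs_eigenvalues {A : Matrix m m ℂ}
    (hA : A.IsHermitian) : traceNorm A = ∑ i, |hA.eigenvalues i| := by
  rw [traceNorm_eq_re_trace_cfc_sqrt, hA.cfc_sqrt_conjTranspose_mul_self, hA.trace_cfc,
    Complex.re_sum]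
  simp only [Complex.coe_algebraMap, Complex.ofReal_re]

end Matrix

theorem maximizer_fixes_eigenvectors_general
    {n : ℕ} (A W : Matrix (Fin n) (Fin n) ℂ)
    (hA : A.IsHermitian)
    (hWnorm : ∀ u : EuclideanSpace ℂ (Fin n), ‖Matrix.toEuclideanLin W u‖ ≤ ‖u‖)
    (hWA : (W * A).trace = (traceNorm A : ℂ))
    (v : Fin n → ℂ) (a : ℝ) (ha : a ≠ 0)
    (heig : A.mulVec v = (a : ℂ) • v) :
    W.mulVec v = (if 0 < a then (1 : ℂ) else (-1 : ℂ)) • v := by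
  have htr : re (LinearMap.trace ℂ _ (toEuclideanLin W ∘ₗ toEuclideanLin A)) =
      ∑ i, |hA.eigenvalues i| := by
    rw [← toLpLin_mul_same, toLpLin_eq_toLin, trace_toLin_eq, hWA,
      hA.traceNorm_eq_sum_abs_eigenvalues]
    exact Complex.ofReal_re _
  have hb : ∀ i, toEuclideanLin A (hA.eigenvectorBasis i) =
      (hA.eigenvalues i : ℂ) • hA.eigenvectorBasis i := fun i => by
    apply WithLp.ofLp_injective
    rw [ofLp_toLpLin, toLin'_apply, hA.mulVec_eigenvectorBasis, WithLp.ofLp_smul,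
      ← Complex.coe_smul]
  exact congrArg WithLp.ofLp <| apply_eq_sign_smul_of_re_trace_comp_eq
    (isSymmetric_toEuclideanLin_iff.mpr hA) hb hWnorm htr ha (congrArg (WithLp.toLp 2) heig)

/-- if `A` and `W` are Hermitian, `W` has operator norm at most `1`
(i.e. `‖W u‖ ≤ ‖u‖` for all `u`), and `Tr(W A) = ‖A‖₁`, then every eigenvector `v` of `A`
with nonzero eigenvalue `a` satisfies `W v = sign(a) v`, where `sign(a) = 1` if `a > 0`
and `sign(a) = −1` if `a < 0`. -/
theorem maximizer_fixes_eigenvectors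
    {n : ℕ} (A W : Matrix (Fin n) (Fin n) ℂ)
    (hA : A.IsHermitian) (hW : W.IsHermitian)
    (hWnorm : ∀ u : EuclideanSpace ℂ (Fin n), ‖Matrix.toEuclideanLin W u‖ ≤ ‖u‖)
    (hWA : (W * A).trace = (traceNorm A : ℂ))
    (v : Fin n → ℂ) (hv : v ≠ 0) (a : ℝ) (ha : a ≠ 0)
    (heig : A.mulVec v = (a : ℂ) • v) :
    W.mulVec v = (if 0 < a then (1 : ℂ) else (-1 : ℂ)) • v :=
  maximizer_fixes_eigenvectors_general A W hA hWnorm hWA v a ha heig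
end

section
/- Let Δ ∈ M_m(ℂ) be Hermitian with Jordan decomposition Δ = Δ₊ − Δ₋, and let λ : M_m(ℂ) → M_d(ℂ) be a completely positive trace-preserving (CPTP) map. Write the Jordan decomposition λ(Δ) = Q₊ − Q₋ and let Π₊, Π₋ be the orthogonal projectors onto the supports of Q₊ and Q₋ respectively. Then ‖λ(Δ)‖₁ = ‖Δ‖₁ if and only if Π₊ λ(Δ₊) Π₊ = λ(Δ₊), Π₋ λ(Δ₋) Π₋ = λ(Δ₋), Π₊ λ(Δ₋) Π₊ = 0, and Π₋ λ(Δ₊) Π₋ = 0. -/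
open scoped ComplexOrder

/-- The tensor product `Φ ⊗ id_{M_k(ℂ)}` of a map between matrix algebras with the
identity on `M_k(ℂ)`, acting blockwise. -/
def mapTensorId {m d : Type*} [Fintype m] [Fintype d] (k : ℕ)
    (Φ : Matrix m m ℂ → Matrix d d ℂ)
    (M : Matrix (m × Fin k) (m × Fin k) ℂ) : Matrix (d × Fin k) (d × Fin k) ℂ :=
  Matrix.of fun p q => Φ (Matrix.of fun i j => M (i, p.2) (j, q.2)) p.1 q.1

/-- A map between matrix algebras is completely positive if `Φ ⊗ id_{M_k(ℂ)}` is
positive for every `k`. -/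
def IsCompletelyPositive {m d : Type*} [Fintype m] [Fintype d]
    (Φ : Matrix m m ℂ → Matrix d d ℂ) : Prop :=
  ∀ (k : ℕ) (M : Matrix (m × Fin k) (m × Fin k) ℂ),
    M.PosSemidef → (mapTensorId k Φ M).PosSemidef

/-- A map between matrix algebras is trace-preserving if `Tr (Φ X) = Tr X` for all `X`. -/
def IsTracePreservingMap {m d : Type*} [Fintype m] [Fintype d]
    (Φ : Matrix m m ℂ → Matrix d d ℂ) : Prop :=
  ∀ X : Matrix m m ℂ, (Φ X).trace = X.trace

/-- `P` is the orthogonal projector onto the support (range) of the Hermitian matrix `Q`: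
it is a Hermitian idempotent that acts as the identity on the range of `Q` and vanishes
on its kernel. -/
def IsSupportProjection {d : Type*} [Fintype d]
    (P Q : Matrix d d ℂ) : Prop :=
  P.IsHermitian ∧ P * P = P ∧ P * Q = Q ∧
    ∀ v : d → ℂ, Q.mulVec v = 0 → P.mulVec v = 0

/-!
Write `a = λ(Δ₊)` and `b = λ(Δ₋)`, which are positive semidefinite by complete positivity.
For a Jordan decomposition `A = A₊ − A₋` one has `√(AᴴA) = A₊ + A₋`, so `‖A‖₁ = Tr A₊ + Tr A₋`.
Since `Q₊ = Π₊ (a − b) Π₊`, trace preservation gives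
`Tr Q₊ = Tr Δ₊ − Tr((1 − Π₊) a (1 − Π₊)) − Tr(Π₊ b Π₊)`, and symmetrically for `Q₋`.
Hence `‖Δ‖₁ − ‖λ(Δ)‖₁` is a sum of four traces of positive semidefinite compressions,
and it vanishes exactly when all four compressions vanish.
-/

open scoped MatrixOrder
open Matrix

lemma IsSelfAdjoint.mul_eq_zero_swap {R : Type*} [NonUnitalNonAssocSemiring R] [StarRing R]
    {a b : R} (ha : IsSelfAdjoint a) (hb : IsSelfAdjoint b) (h : a * b = 0) : b * a = 0 := by
  simpa [ha.star_eq, hb.star_eq] using congrArg star h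

lemma IsCompletelyPositive.posSemidef_apply {m d : Type*} [Fintype m] [Fintype d]
    {Φ : Matrix m m ℂ → Matrix d d ℂ} (hΦ : IsCompletelyPositive Φ) {A : Matrix m m ℂ}
    (hA : A.PosSemidef) : (Φ A).PosSemidef :=
  (hΦ 1 (A.submatrix Prod.fst Prod.fst) (hA.submatrix _)).submatrix fun i => (i, 0)

section

variable {n : Type*} [Fintype n]

lemma Matrix.PosSemidef.mul_mul_of_isHermitian {c P : Matrix n n ℂ} (hc : c.PosSemidef)
    (hP : P.IsHermitian) : (P * c * P).PosSemidef := by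
  simpa [hP.eq] using hc.conjTranspose_mul_mul_same P

namespace IsSupportProjection

variable {P Q : Matrix n n ℂ}

lemma mul_eq_zero_of_mul_eq_zero (hP : IsSupportProjection P Q) {N : Matrix n n ℂ}
    (hQN : Q * N = 0) : P * N = 0 := by
  ext i j
  have hcol : Q *ᵥ (fun k => N k j) = 0 := funext fun i' => by
    simpa [Matrix.mul_apply, mulVec, dotProduct] using congrFun (congrFun hQN i') j
  simpa [mulVec, dotProduct, Matrix.mul_apply] using congrFun (hP.2.2.2 _ hcol) i

lemma mul_eq_self (hP : IsSupportProjection P Q) (hQ : Q.IsHermitian) : Q * P = Q := by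
  simpa [hQ.eq, hP.1.eq] using congrArg (·ᴴ) hP.2.2.1

lemma mul_sub_mul_eq (hP : IsSupportProjection P Q) (hQ : Q.IsHermitian) {Q' : Matrix n n ℂ}
    (horth : Q * Q' = 0) : P * (Q - Q') * P = Q := by
  rw [Matrix.mul_sub, hP.2.2.1, hP.mul_eq_zero_of_mul_eq_zero horth, sub_zero, hP.mul_eq_self hQ]

end IsSupportProjection

variable [DecidableEq n]

lemma traceNorm_eq_re_trace_sqrt (A : Matrix n n ℂ) :
    traceNorm A = (CFC.sqrt (Aᴴ * A)).trace.re := by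
  unfold traceNorm
  rw [CFC.sqrt_eq_real_sqrt (Aᴴ * A) (posSemidef_conjTranspose_mul_self A).nonneg,
    cfcₙ_eq_cfc (hf0 := Real.sqrt_zero), (posSemidef_conjTranspose_mul_self A).1.cfc_eq]
  simp [IsHermitian.cfc, Unitary.conjStarAlgAut_apply]

theorem traceNorm_eq_trace_add_trace {A Ap Am : Matrix n n ℂ}
    (hAp : Ap.PosSemidef) (hAm : Am.PosSemidef) (hA : A = Ap - Am) (horth : Ap * Am = 0) :
    (traceNorm A : ℂ) = Ap.trace + Am.trace := by
  have horth' : Am * Ap = 0 := hAp.1.isSelfAdjoint.mul_eq_zero_swap hAm.1.isSelfAdjoint horth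
  have hsq : Aᴴ * A = (Ap + Am) ^ 2 := by
    rw [hA, (hAp.1.sub hAm.1).eq, sq]
    noncomm_ring
    rw [horth, horth']
    abel
  rw [traceNorm_eq_re_trace_sqrt, hsq, CFC.sqrt_sq (Ap + Am) (hAp.add hAm).nonneg, ← trace_add]
  have hnonneg : ((0 : ℝ) : ℂ) ≤ (Ap + Am).trace := by
    rw [Complex.ofReal_zero]; exact (hAp.add hAm).trace_nonneg
  exact (Complex.eq_re_of_ofReal_le hnonneg).symm

lemma Matrix.trace_mul_mul_add_trace_one_sub_mul_mul {R : Type*} [CommRing R]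
    {P : Matrix n n R} (hP : IsIdempotentElem P) (a : Matrix n n R) :
    (P * a * P).trace + ((1 - P) * a * (1 - P)).trace = a.trace := by
  have hPaP : (P * a * P).trace = (P * a).trace := by
    rw [trace_mul_comm (P * a), ← Matrix.mul_assoc, hP.eq]
  have hexpand : (1 - P) * a * (1 - P) = a - P * a - a * P + P * a * P := by noncomm_ring
  rw [hexpand, trace_add, trace_sub, trace_sub, hPaP, trace_mul_comm a P]
  ring

lemma Matrix.PosSemidef.mul_eq_zero_of_mul_mul_eq_zero {c P : Matrix n n ℂ}
    (hc : c.PosSemidef) (hP : P.IsHermitian) (h : P * c * P = 0) : c * P = 0 := by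
  have hsqrt : (CFC.sqrt c * P)ᴴ * (CFC.sqrt c * P) = P * c * P := by
    rw [conjTranspose_mul, (CFC.sqrt_nonneg c).posSemidef.1, hP.eq, Matrix.mul_assoc,
      ← Matrix.mul_assoc (CFC.sqrt c), CFC.sqrt_mul_sqrt_self c hc.nonneg, ← Matrix.mul_assoc]
  rw [h, conjTranspose_mul_self_eq_zero] at hsqrt
  rw [← CFC.sqrt_mul_sqrt_self c hc.nonneg, Matrix.mul_assoc, hsqrt, Matrix.mul_zero]

lemma Matrix.PosSemidef.one_sub_mul_mul_eq_zero_iff {c P : Matrix n n ℂ} (hc : c.PosSemidef)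
    (hP : P.IsHermitian) (hPP : IsIdempotentElem P) :
    (1 - P) * c * (1 - P) = 0 ↔ P * c * P = c := by
  constructor
  · intro h
    have hcP : c * P = c := by
      simpa [Matrix.mul_sub, sub_eq_zero, eq_comm] using
        hc.mul_eq_zero_of_mul_mul_eq_zero (isHermitian_one.sub hP) h
    have hPc : P * c = c := by
      simpa [hc.1.eq, hP.eq] using congrArg (·ᴴ) hcP
    rw [Matrix.mul_assoc, hcP, hPc]
  · intro h
    have hPc : P * c = c := by
      rw [← h, ← Matrix.mul_assoc, ← Matrix.mul_assoc, hPP.eq]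
    rw [Matrix.sub_mul, Matrix.one_mul, hPc, sub_self, Matrix.zero_mul]

/-- For idempotent `P` this is `Tr a − Tr (P (a − b) P)`; both summands are `≥ 0` when
`a, b ⪰ 0`. -/
def compressionLoss (P a b : Matrix n n ℂ) : ℂ :=
  ((1 - P) * a * (1 - P)).trace + (P * b * P).trace

lemma compressionLoss_nonneg {P a b : Matrix n n ℂ} (ha : a.PosSemidef) (hb : b.PosSemidef)
    (hP : P.IsHermitian) :
    0 ≤ compressionLoss P a b :=
  add_nonneg (ha.mul_mul_of_isHermitian (isHermitian_one.sub hP)).trace_nonneg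
    (hb.mul_mul_of_isHermitian hP).trace_nonneg

lemma compressionLoss_eq_zero_iff {P a b : Matrix n n ℂ} (ha : a.PosSemidef) (hb : b.PosSemidef)
    (hP : P.IsHermitian) (hPP : IsIdempotentElem P) :
    compressionLoss P a b = 0 ↔ P * a * P = a ∧ P * b * P = 0 := by
  have ha' := ha.mul_mul_of_isHermitian (isHermitian_one.sub hP)
  have hb' := hb.mul_mul_of_isHermitian hP
  rw [compressionLoss, add_eq_zero_iff_of_nonneg ha'.trace_nonneg hb'.trace_nonneg,
    ha'.trace_eq_zero_iff, hb'.trace_eq_zero_iff, ha.one_sub_mul_mul_eq_zero_iff hP hPP]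

lemma IsSupportProjection.trace_add_compressionLoss {P Q Q' a b : Matrix n n ℂ}
    (hP : IsSupportProjection P Q) (hQ : Q.IsHermitian) (horth : Q * Q' = 0)
    (hab : a - b = Q - Q') :
    Q.trace + compressionLoss P a b = a.trace := by
  rw [← hP.mul_sub_mul_eq hQ horth, ← hab, Matrix.mul_sub, Matrix.sub_mul, trace_sub,
    compressionLoss, ← trace_mul_mul_add_trace_one_sub_mul_mul hP.2.1 a]
  ring

end

theorem traceNorm_preserved_iff_support_conditions_general
    {m d : ℕ}
    (Δ Δp Δm : Matrix (Fin m) (Fin m) ℂ)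
    (hΔp : Δp.PosSemidef) (hΔm : Δm.PosSemidef)
    (hJordan : Δ = Δp - Δm) (horth : Δp * Δm = 0)
    (lam : Matrix (Fin m) (Fin m) ℂ → Matrix (Fin d) (Fin d) ℂ)
    (hlin : IsLinearMap ℂ lam) (hcp : IsCompletelyPositive lam)
    (htp : IsTracePreservingMap lam)
    (Qp Qm : Matrix (Fin d) (Fin d) ℂ)
    (hQp : Qp.PosSemidef) (hQm : Qm.PosSemidef)
    (hQJordan : lam Δ = Qp - Qm) (hQorth : Qp * Qm = 0)
    (Pp Pm : Matrix (Fin d) (Fin d) ℂ)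
    (hPp : IsSupportProjection Pp Qp) (hPm : IsSupportProjection Pm Qm) :
    traceNorm (lam Δ) = traceNorm Δ ↔
      (Pp * lam Δp * Pp = lam Δp ∧ Pm * lam Δm * Pm = lam Δm ∧
       Pp * lam Δm * Pp = 0 ∧ Pm * lam Δp * Pm = 0) := by
  have ha := hcp.posSemidef_apply hΔp
  have hb := hcp.posSemidef_apply hΔm
  have hab : lam Δp - lam Δm = Qp - Qm := by rw [← hlin.map_sub, ← hJordan, hQJordan]
  have hp := hPp.trace_add_compressionLoss hQp.1 hQorth hab
  have hm := hPm.trace_add_compressionLoss (a := lam Δm) (b := lam Δp) hQm.1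
    (hQp.1.isSelfAdjoint.mul_eq_zero_swap hQm.1.isSelfAdjoint hQorth)
    (by rw [← neg_sub, hab, neg_sub])
  rw [htp] at hp hm
  rw [← Complex.ofReal_inj, traceNorm_eq_trace_add_trace hQp hQm hQJordan hQorth,
    traceNorm_eq_trace_add_trace hΔp hΔm hJordan horth, ← and_assoc, ← and_and_and_comm,
    ← compressionLoss_eq_zero_iff ha hb hPp.1 hPp.2.1,
    ← compressionLoss_eq_zero_iff hb ha hPm.1 hPm.2.1,
    ← add_eq_zero_iff_of_nonneg (compressionLoss_nonneg ha hb hPp.1)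
      (compressionLoss_nonneg hb ha hPm.1)]
  constructor <;> intro h <;> linear_combination hp + hm - h

/-- let `Δ` be Hermitian with Jordan decomposition `Δ = Δ₊ − Δ₋`, let `λ`
be a CPTP map, let `λ(Δ) = Q₊ − Q₋` be the Jordan decomposition of the image, and let
`Π₊, Π₋` be the orthogonal projectors onto the supports of `Q₊` and `Q₋`. Then
`‖λ(Δ)‖₁ = ‖Δ‖₁` iff `Π₊ λ(Δ₊) Π₊ = λ(Δ₊)`, `Π₋ λ(Δ₋) Π₋ = λ(Δ₋)`,
`Π₊ λ(Δ₋) Π₊ = 0` and `Π₋ λ(Δ₊) Π₋ = 0`. -/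
theorem traceNorm_preserved_iff_support_conditions
    {m d : ℕ}
    (Δ Δp Δm : Matrix (Fin m) (Fin m) ℂ)
    (hΔ : Δ.IsHermitian)
    (hΔp : Δp.PosSemidef) (hΔm : Δm.PosSemidef)
    (hJordan : Δ = Δp - Δm) (horth : Δp * Δm = 0)
    (lam : Matrix (Fin m) (Fin m) ℂ → Matrix (Fin d) (Fin d) ℂ)
    (hlin : IsLinearMap ℂ lam) (hcp : IsCompletelyPositive lam)
    (htp : IsTracePreservingMap lam)
    (Qp Qm : Matrix (Fin d) (Fin d) ℂ)
    (hQp : Qp.PosSemidef) (hQm : Qm.PosSemidef)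
    (hQJordan : lam Δ = Qp - Qm) (hQorth : Qp * Qm = 0)
    (Pp Pm : Matrix (Fin d) (Fin d) ℂ)
    (hPp : IsSupportProjection Pp Qp) (hPm : IsSupportProjection Pm Qm) :
    traceNorm (lam Δ) = traceNorm Δ ↔
      (Pp * lam Δp * Pp = lam Δp ∧ Pm * lam Δm * Pm = lam Δm ∧
       Pp * lam Δm * Pp = 0 ∧ Pm * lam Δp * Pm = 0) :=
  traceNorm_preserved_iff_support_conditions_general Δ Δp Δm hΔp hΔm hJordan horth lam hlin hcp htp
    Qp Qm hQp hQm hQJordan hQorth Pp Pm hPp hPm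
end
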